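/- For a,b,w > 0 with w²(a²+b²)=1 and |bw|<1, the vector u(s) = aw²( (a/2)[cos(w(1+bw)s)/(1+bw) + cos(w(1−bw)s)/(1−bw)], (a/2)[sin(w(1+bw)s)/(1+bw) + sin(w(1−bw)s)/(1−bw)], (1/w)sin(bw²s) ) has norm 1 for all s ∈ ℝ. -/

import Mathlib

noncomputable def vec3 (x y z : ℝ) : EuclideanSpace ℝ (Fin 3) := !₂[x, y, z]

theorem stmt_14 (a b w : ℝ) (ha : 0 < a) (hb : 0 < b) (hw : 0 < w)
    (h1 : w ^ 2 * (a ^ 2 + b ^ 2) = 1) (h2 : b * w ≠ 1) (h3 : b * w ≠ -1)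
    (u : ℝ → EuclideanSpace ℝ (Fin 3))
    (hu : ∀ s, u s = (a * w ^ 2) • vec3
      (a / 2 * (Real.cos (w * (1 + b * w) * s) / (1 + b * w)
        + Real.cos (w * (1 - b * w) * s) / (1 - b * w)))
      (a / 2 * (Real.sin (w * (1 + b * w) * s) / (1 + b * w)
        + Real.sin (w * (1 - b * w) * s) / (1 - b * w)))
      (1 / w * Real.sin (b * w ^ 2 * s))) :
    ∀ s : ℝ, ‖u s‖ = 1 := by
  intro s
  have hw0 : w ≠ 0 := hw.ne'
  have hp : 1 + b * w ≠ 0 := fun h => h3 (by linarith)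
  have hm : 1 - b * w ≠ 0 := fun h => h2 (by linarith)
  have hA := Real.sin_sq_add_cos_sq (w * (1 + b * w) * s)
  have hB := Real.sin_sq_add_cos_sq (w * (1 - b * w) * s)
  have hC : Real.cos (w * (1 + b * w) * s) * Real.cos (w * (1 - b * w) * s)
      + Real.sin (w * (1 + b * w) * s) * Real.sin (w * (1 - b * w) * s)
      = 1 - 2 * Real.sin (b * w ^ 2 * s) ^ 2 := by
    rw [← Real.cos_sub, show w * (1 + b * w) * s - w * (1 - b * w) * s
        = 2 * (b * w ^ 2 * s) by ring, Real.cos_two_mul']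
    linarith [Real.sin_sq_add_cos_sq (b * w ^ 2 * s)]
  rw [hu s, vec3]
  rw [EuclideanSpace.norm_eq]
  simp only [PiLp.smul_apply, smul_eq_mul, Fin.sum_univ_three,
    Matrix.cons_val_zero, Matrix.cons_val_one, Matrix.head_cons,
    Matrix.cons_val_two, Matrix.tail_cons, Real.norm_eq_abs, sq_abs]
  rw [Real.sqrt_eq_one]
  generalize Real.cos (w * (1 + b * w) * s) = c1 at hA hC ⊢
  generalize Real.cos (w * (1 - b * w) * s) = c2 at hB hC ⊢
  generalize Real.sin (w * (1 + b * w) * s) = s1 at hA hC ⊢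
  generalize Real.sin (w * (1 - b * w) * s) = s2 at hB hC ⊢
  generalize Real.sin (b * w ^ 2 * s) = t at hC ⊢
  have hm' : 1 - w * b ≠ 0 := by rwa [mul_comm]
  field_simp
  linear_combination (a^4*w^4*(1-b*w)^2) * hA + (a^4*w^4*(1+b*w)^2) * hB
    + (2*a^4*w^4*(1-(b*w)^2)) * hC
    + (4*(a^2*w^2+1-(b*w)^2) - 4*a^2*w^2*(1-(b*w)^2)*t^2) * h1
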